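/- Graph representation of the two-mode squeezed state: let r ∈ ℝ, U = sech(2r)·I₂, V = tanh(2r)·J where J = [[0,1],[1,0]]. Then the graph-state covariance matrix satisfies Σ(U,V) = (1/2)·[[cosh(2r)·I₂, sinh(2r)·J],[sinh(2r)·J, cosh(2r)·I₂]]; i.e. the Fourier-rotated two-mode squeezed vacuum of parameter r is exactly the Gaussian graph state with complex graph Z = tanh(2r)·J + i·sech(2r)·I₂. -/

import Mathlib

open Matrix

/-- The quadrature-ordered covariance matrix `Σ(U,V)` of the pure Gaussian state with
complex graph `Z = V + iU`, in the ordering `(Q₁,…,Q_N,P₁,…,P_N)`. -/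
noncomputable def gaussianCov {N : ℕ} (U V : Matrix (Fin N) (Fin N) ℝ) :
    Matrix (Fin N ⊕ Fin N) (Fin N ⊕ Fin N) ℝ :=
  (1 / 2 : ℝ) • Matrix.fromBlocks U⁻¹ (U⁻¹ * V) (V * U⁻¹) (U + V * U⁻¹ * V)

/-! Since `J² = 1`, `tanh`-weighted `J` and a `sech`-multiple of the identity make every block
of `Σ(U,V)` a scalar multiple of `1` or `J`; the scalars are then `cosh · tanh = sinh` and
`sech + cosh · tanh² = (1 + sinh²) / cosh = cosh`. -/

lemma Real.cosh_mul_tanh (x : ℝ) : Real.cosh x * Real.tanh x = Real.sinh x := by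
  rw [Real.tanh_eq_sinh_div_cosh, mul_div_cancel₀ _ (Real.cosh_pos x).ne']

lemma Real.inv_cosh_add_cosh_mul_tanh_sq (x : ℝ) :
    (Real.cosh x)⁻¹ + Real.cosh x * Real.tanh x ^ 2 = Real.cosh x := by
  have hc : Real.cosh x ≠ 0 := (Real.cosh_pos x).ne'
  rw [Real.tanh_eq_sinh_div_cosh]
  field_simp
  linear_combination -Real.cosh_sq_sub_sinh_sq x

lemma Matrix.swap_mul_swap {R : Type*} [Semiring R] :
    (!![0, 1; 1, 0] : Matrix (Fin 2) (Fin 2) R) * !![0, 1; 1, 0] = 1 := by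
  rw [mul_fin_two, one_fin_two]
  simp

lemma Matrix.inv_smul_one_of_ne_zero {n : Type*} [Fintype n] [DecidableEq n] {c : ℝ}
    (hc : c ≠ 0) : (c⁻¹ • (1 : Matrix n n ℝ))⁻¹ = c • 1 :=
  inv_eq_right_inv <| by rw [smul_mul_smul, one_mul, inv_mul_cancel₀ hc, one_smul]

lemma gaussianCov_inv_smul_one_smul_involutive {N : ℕ} {c t : ℝ} (hc : c ≠ 0)
    {J : Matrix (Fin N) (Fin N) ℝ} (hJ : J * J = 1) :
    gaussianCov (c⁻¹ • 1) (t • J)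
      = (1 / 2 : ℝ) • fromBlocks (c • 1) ((c * t) • J) ((c * t) • J)
          ((c⁻¹ + c * t ^ 2) • 1) := by
  rw [gaussianCov, inv_smul_one_of_ne_zero hc]
  congr 2
  · rw [smul_mul_smul, one_mul]
  · rw [smul_mul_smul, mul_one, mul_comm]
  · rw [smul_mul_smul, mul_one, smul_mul_smul, hJ, add_smul]
    ring_nf

/-- graph representation of the two-mode squeezed state: with
`U = sech(2r)·I₂` and `V = tanh(2r)·J`, `J = [[0,1],[1,0]]`, one has
`Σ(U,V) = (1/2)·[[cosh(2r)·I₂, sinh(2r)·J],[sinh(2r)·J, cosh(2r)·I₂]]`; i.e. the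
Fourier-rotated two-mode squeezed vacuum of parameter `r` is exactly the Gaussian graph
state with complex graph `Z = tanh(2r)·J + i·sech(2r)·I₂`. -/
theorem tmss_is_graph_state (r : ℝ) :
    gaussianCov ((Real.cosh (2 * r))⁻¹ • (1 : Matrix (Fin 2) (Fin 2) ℝ))
        (Real.tanh (2 * r) • !![0, 1; 1, 0])
      = (1 / 2 : ℝ) • Matrix.fromBlocks
          (Real.cosh (2 * r) • (1 : Matrix (Fin 2) (Fin 2) ℝ))
          (Real.sinh (2 * r) • !![0, 1; 1, 0])
          (Real.sinh (2 * r) • !![0, 1; 1, 0])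
          (Real.cosh (2 * r) • (1 : Matrix (Fin 2) (Fin 2) ℝ)) := by
  rw [gaussianCov_inv_smul_one_smul_involutive (Real.cosh_pos _).ne' swap_mul_swap,
    Real.cosh_mul_tanh, Real.inv_cosh_add_cosh_mul_tanh_sq]
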